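/- arXiv:2511.06511 — 5 statements merged into one kernel-verified Lean document; each statement's English description precedes it below -/
import Mathlib

section
/- Let x : ℝ → ℝ³ be twice differentiable and u₁, u₂ : ℝ → ℝ with u₁ differentiable, satisfying x'(t) = u₁(t)·g₁(x(t)) + u₂(t)·g₂(x(t)) for all t, where g₁(x) = (cos x₃, sin x₃, 0) and g₂(x) = (0,0,1). Then at every t with u₁(t) ≠ 0, u₂(t) = (x₂''(t)·x₁'(t) − x₁''(t)·x₂'(t)) / (x₁'(t)² + x₂'(t)²). -/
/-- Kinematic car: first input vector field `g₁(x) = (cos x₃, sin x₃, 0)`. -/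
noncomputable def carG1 (x : Fin 3 → ℝ) : Fin 3 → ℝ := ![Real.cos (x 2), Real.sin (x 2), 0]

/-- Kinematic car: second input vector field `g₂(x) = (0, 0, 1)`. -/
noncomputable def carG2 (_x : Fin 3 → ℝ) : Fin 3 → ℝ := ![0, 0, 1]

/-!
The car's planar velocity is `(ẋ₁, ẋ₂) = u₁ (cos θ, sin θ)` and its heading obeys `θ̇ = u₂`.
For any planar velocity written in polar form `v (cos θ, sin θ)`, the cross product of the
velocity with the acceleration is `v² θ̇` (the radial term `v̇` drops out) and the squared speed
is `v²`, so `θ̇` is their quotient wherever `v ≠ 0`.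
-/

open Real

theorem polar_cross_eq_sq_mul (v v' θ ω : ℝ) :
    (v' * sin θ + v * (cos θ * ω)) * (v * cos θ) - (v' * cos θ - v * (sin θ * ω)) * (v * sin θ)
      = v ^ 2 * ω := by
  linear_combination v ^ 2 * ω * sin_sq_add_cos_sq θ

theorem polar_sq_add_sq (v θ : ℝ) : (v * cos θ) ^ 2 + (v * sin θ) ^ 2 = v ^ 2 := by
  linear_combination v ^ 2 * cos_sq_add_sin_sq θ

theorem angular_rate_eq_cross_div_speed_sq {v θ : ℝ → ℝ} {t v' ω : ℝ}
    (hv : HasDerivAt v v' t) (hθ : HasDerivAt θ ω t) (hv₀ : v t ≠ 0) :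
    ω = (deriv (fun s => v s * sin (θ s)) t * (v t * cos (θ t))
          - deriv (fun s => v s * cos (θ s)) t * (v t * sin (θ t)))
        / ((v t * cos (θ t)) ^ 2 + (v t * sin (θ t)) ^ 2) := by
  have hcos : HasDerivAt (fun s => v s * cos (θ s)) (v' * cos (θ t) - v t * (sin (θ t) * ω)) t :=
    (hv.mul hθ.cos).congr_deriv (by ring)
  have hsin : HasDerivAt (fun s => v s * sin (θ s)) (v' * sin (θ t) + v t * (cos (θ t) * ω)) t :=
    hv.mul hθ.sin
  rw [hcos.deriv, hsin.deriv, polar_cross_eq_sq_mul, polar_sq_add_sq,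
    mul_div_cancel_left₀ _ (pow_ne_zero 2 hv₀)]

theorem car_field_apply_zero (a b : ℝ) (p : Fin 3 → ℝ) :
    (a • carG1 p + b • carG2 p) 0 = a * cos (p 2) := by
  simp [carG1, carG2]

theorem car_field_apply_one (a b : ℝ) (p : Fin 3 → ℝ) :
    (a • carG1 p + b • carG2 p) 1 = a * sin (p 2) := by
  simp [carG1, carG2]

theorem car_field_apply_two (a b : ℝ) (p : Fin 3 → ℝ) :
    (a • carG1 p + b • carG2 p) 2 = b := by
  simp [carG1, carG2]

theorem car_second_input_from_flat_outputs_general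
    (x : ℝ → (Fin 3 → ℝ)) (u₁ u₂ : ℝ → ℝ)
    (hx : Differentiable ℝ x)
    (hu₁ : Differentiable ℝ u₁)
    (hsys : ∀ t, deriv x t = u₁ t • carG1 (x t) + u₂ t • carG2 (x t)) :
    ∀ t : ℝ, u₁ t ≠ 0 →
      u₂ t = (deriv (deriv (fun s => x s 1)) t * deriv (fun s => x s 0) t
              - deriv (deriv (fun s => x s 0)) t * deriv (fun s => x s 1) t)
            / ((deriv (fun s => x s 0) t) ^ 2 + (deriv (fun s => x s 1) t) ^ 2) := by
  intro t hu
  have hcoord (i : Fin 3) (s : ℝ) : HasDerivAt (fun r => x r i) (deriv x s i) s :=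
    hasDerivAt_pi.mp (hx s).hasDerivAt i
  have hx₀ : deriv (fun s => x s 0) = fun s => u₁ s * cos (x s 2) :=
    funext fun s => by rw [(hcoord 0 s).deriv, hsys s, car_field_apply_zero]
  have hx₁ : deriv (fun s => x s 1) = fun s => u₁ s * sin (x s 2) :=
    funext fun s => by rw [(hcoord 1 s).deriv, hsys s, car_field_apply_one]
  have hθ : HasDerivAt (fun s => x s 2) (u₂ t) t := by
    simpa only [hsys t, car_field_apply_two] using hcoord 2 t
  rw [hx₀, hx₁]
  exact angular_rate_eq_cross_div_speed_sq (hu₁ t).hasDerivAt hθ hu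

theorem car_second_input_from_flat_outputs
    (x : ℝ → (Fin 3 → ℝ)) (u₁ u₂ : ℝ → ℝ)
    (hx : Differentiable ℝ x) (hx' : Differentiable ℝ (deriv x))
    (hu₁ : Differentiable ℝ u₁)
    (hsys : ∀ t, deriv x t = u₁ t • carG1 (x t) + u₂ t • carG2 (x t)) :
    ∀ t : ℝ, u₁ t ≠ 0 →
      u₂ t = (deriv (deriv (fun s => x s 1)) t * deriv (fun s => x s 0) t
              - deriv (deriv (fun s => x s 0)) t * deriv (fun s => x s 1) t)
            / ((deriv (fun s => x s 0) t) ^ 2 + (deriv (fun s => x s 1) t) ^ 2) :=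
  car_second_input_from_flat_outputs_general x u₁ u₂ hx hu₁ hsys
end

section
/- Let m, n ≥ 1 and let g₁, …, g_m : ℝⁿ → ℝⁿ be C^∞ vector fields. On ℝⁿ × ℝᵐ × ℝ (coordinates (x, u, w)) define G₀(x, u, w) = (Σᵢ₌₁ᵐ uᵢ·gᵢ(x), w·e_m, 0), W(x,u,w) = (0, 0, 1), Eᵢ(x,u,w) = (0, eᵢ, 0), and Gᵢ(x,u,w) = (gᵢ(x), 0, 0), where eᵢ is the i-th standard basis vector of ℝᵐ. Then: (i) [W, G₀] = E_m; (ii) [[W, G₀], G₀] = G_m; (iii) [Eᵢ, G₀] = Gᵢ for every i; and (iv) [[Eᵢ, G₀], G₀](x, u, w) = (Σⱼ₌₁ᵐ uⱼ·[gᵢ, gⱼ](x), 0, 0) for every i and every (x, u, w). -/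
theorem one_integrator_prolongation_brackets
    (m n : ℕ) (hm : 1 ≤ m) (hn : 1 ≤ n)
    (g : Fin m → (Fin n → ℝ) → (Fin n → ℝ))
    (hg : ∀ i, ContDiff ℝ (⊤ : ℕ∞) (g i)) :
    let lastIdx : Fin m := ⟨m - 1, by omega⟩
    let G₀ : (Fin n → ℝ) × (Fin m → ℝ) × ℝ → (Fin n → ℝ) × (Fin m → ℝ) × ℝ :=
      fun p => ((∑ i, p.2.1 i • g i p.1 : Fin n → ℝ),
                 (p.2.2 • (Pi.single lastIdx (1 : ℝ) : Fin m → ℝ)), (0 : ℝ))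
    let W : (Fin n → ℝ) × (Fin m → ℝ) × ℝ → (Fin n → ℝ) × (Fin m → ℝ) × ℝ :=
      fun _p => ((0 : Fin n → ℝ), (0 : Fin m → ℝ), (1 : ℝ))
    let Ef : Fin m → (Fin n → ℝ) × (Fin m → ℝ) × ℝ → (Fin n → ℝ) × (Fin m → ℝ) × ℝ :=
      fun i _p => ((0 : Fin n → ℝ), Pi.single i (1 : ℝ), (0 : ℝ))
    let Gf : Fin m → (Fin n → ℝ) × (Fin m → ℝ) × ℝ → (Fin n → ℝ) × (Fin m → ℝ) × ℝ :=
      fun i p => ((g i p.1 : Fin n → ℝ), (0 : Fin m → ℝ), (0 : ℝ))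
    VectorField.lieBracket ℝ W G₀ = Ef lastIdx ∧
    VectorField.lieBracket ℝ (VectorField.lieBracket ℝ W G₀) G₀ = Gf lastIdx ∧
    (∀ i : Fin m, VectorField.lieBracket ℝ (Ef i) G₀ = Gf i) ∧
    (∀ i : Fin m, ∀ p : (Fin n → ℝ) × (Fin m → ℝ) × ℝ,
      VectorField.lieBracket ℝ (VectorField.lieBracket ℝ (Ef i) G₀) G₀ p
        = ((∑ j, p.2.1 j • VectorField.lieBracket ℝ (g i) (g j) p.1 : Fin n → ℝ),
            (0 : Fin m → ℝ), (0 : ℝ))) := by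
  intro lastIdx G₀ W Ef Gf
  have hgd : ∀ i, Differentiable ℝ (g i) := fun i => (hg i).differentiable (by simp)
  -- abbreviations for the projections
  set F1 : (Fin n → ℝ) × (Fin m → ℝ) × ℝ →L[ℝ] (Fin n → ℝ) :=
    ContinuousLinearMap.fst ℝ (Fin n → ℝ) ((Fin m → ℝ) × ℝ) with hF1
  set S : (Fin n → ℝ) × (Fin m → ℝ) × ℝ →L[ℝ] (Fin m → ℝ) × ℝ :=
    ContinuousLinearMap.snd ℝ (Fin n → ℝ) ((Fin m → ℝ) × ℝ) with hS
  set F2 : (Fin n → ℝ) × (Fin m → ℝ) × ℝ →L[ℝ] (Fin m → ℝ) :=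
    (ContinuousLinearMap.fst ℝ (Fin m → ℝ) ℝ).comp S with hF2
  set F3 : (Fin n → ℝ) × (Fin m → ℝ) × ℝ →L[ℝ] ℝ :=
    (ContinuousLinearMap.snd ℝ (Fin m → ℝ) ℝ).comp S with hF3
  -- derivative of G₀
  have hG₀ : ∀ p : (Fin n → ℝ) × (Fin m → ℝ) × ℝ,
      HasFDerivAt G₀
        ((∑ i, (p.2.1 i • ((fderiv ℝ (g i) p.1).comp F1) +
            ((ContinuousLinearMap.proj (R := ℝ) (φ := fun _ : Fin m => ℝ) i).comp
                F2).smulRight (g i p.1))).prod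
          ((F3.smulRight (Pi.single lastIdx (1 : ℝ))).prod 0)) p := by
    intro p
    apply HasFDerivAt.prodMk
    · apply HasFDerivAt.fun_sum
      intro i _
      have hc : HasFDerivAt (fun q : (Fin n → ℝ) × (Fin m → ℝ) × ℝ => q.2.1 i)
          ((ContinuousLinearMap.proj (R := ℝ) (φ := fun _ : Fin m => ℝ) i).comp F2) p :=
        (((ContinuousLinearMap.proj (R := ℝ) (φ := fun _ : Fin m => ℝ) i).comp
          F2)).hasFDerivAt
      have hf : HasFDerivAt (fun q : (Fin n → ℝ) × (Fin m → ℝ) × ℝ => g i q.1)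
          ((fderiv ℝ (g i) p.1).comp F1) p :=
        HasFDerivAt.comp (𝕜 := ℝ) p ((hgd i p.1).hasFDerivAt)
          (hasFDerivAt_fst (p := p))
      have := hc.smul hf
      simpa using this
    · exact ((F3.smulRight ((Pi.single lastIdx (1 : ℝ)) : Fin m → ℝ)).hasFDerivAt).prodMk
        (hasFDerivAt_const (0 : ℝ) p)
  have hfdG₀ : ∀ p : (Fin n → ℝ) × (Fin m → ℝ) × ℝ,
      fderiv ℝ G₀ p =
        ((∑ i, (p.2.1 i • ((fderiv ℝ (g i) p.1).comp F1) +
            ((ContinuousLinearMap.proj (R := ℝ) (φ := fun _ : Fin m => ℝ) i).comp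
                F2).smulRight (g i p.1))).prod
          ((F3.smulRight (Pi.single lastIdx (1 : ℝ))).prod 0)) :=
    fun p => (hG₀ p).fderiv
  -- derivative of Gf i
  have hGf : ∀ i (p : (Fin n → ℝ) × (Fin m → ℝ) × ℝ),
      HasFDerivAt (Gf i) (((fderiv ℝ (g i) p.1).comp F1).prod 0) p := by
    intro i p
    exact (HasFDerivAt.comp (𝕜 := ℝ) p ((hgd i p.1).hasFDerivAt)
      (hasFDerivAt_fst (p := p))).prodMk (hasFDerivAt_const ((0 : Fin m → ℝ), (0 : ℝ)) p)
  have hfdGf : ∀ i (p : (Fin n → ℝ) × (Fin m → ℝ) × ℝ),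
      fderiv ℝ (Gf i) p = ((fderiv ℝ (g i) p.1).comp F1).prod 0 :=
    fun i p => (hGf i p).fderiv
  -- part 1
  have h1 : VectorField.lieBracket ℝ W G₀ = Ef lastIdx := by
    funext p
    simp only [VectorField.lieBracket, hfdG₀, W, Ef]
    simp [Prod.ext_iff, F1, F2, F3, S]
  -- part 3
  have h3 : ∀ i, VectorField.lieBracket ℝ (Ef i) G₀ = Gf i := by
    intro i
    funext p
    simp only [VectorField.lieBracket, hfdG₀, Ef, Gf]
    simp [Prod.ext_iff, F1, F2, F3, S, Pi.single_apply]
  -- part 4 : bracket of Gf i with G₀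
  have h4 : ∀ i (p : (Fin n → ℝ) × (Fin m → ℝ) × ℝ),
      VectorField.lieBracket ℝ (Gf i) G₀ p
        = ((∑ j, p.2.1 j • VectorField.lieBracket ℝ (g i) (g j) p.1 : Fin n → ℝ),
            (0 : Fin m → ℝ), (0 : ℝ)) := by
    intro i p
    simp only [VectorField.lieBracket, hfdG₀, hfdGf, Gf, G₀]
    have hlin : fderiv ℝ (g i) p.1 (∑ j, p.2.1 j • g j p.1)
        = ∑ j, p.2.1 j • fderiv ℝ (g i) p.1 (g j p.1) := by
      rw [map_sum]
      simp
    simp only [ContinuousLinearMap.prod_apply, ContinuousLinearMap.sum_apply,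
      ContinuousLinearMap.add_apply, ContinuousLinearMap.smul_apply,
      ContinuousLinearMap.comp_apply, ContinuousLinearMap.smulRight_apply,
      ContinuousLinearMap.coe_fst', ContinuousLinearMap.coe_snd',
      ContinuousLinearMap.zero_apply, ContinuousLinearMap.proj_apply,
      hF1, hF2, hF3, hS, map_zero, zero_smul, add_zero, smul_zero, zero_mul,
      Prod.mk_sub_mk, sub_zero, hlin, Prod.ext_iff]
    refine ⟨?_, trivial⟩
    rw [← Finset.sum_sub_distrib]
    exact Finset.sum_congr rfl (fun j _ => (smul_sub _ _ _).symm)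
  refine ⟨h1, ?_, h3, fun i p => ?_⟩
  · rw [h1]; exact h3 lastIdx
  · rw [h3 i]; exact h4 i p
end

section
/- Let g₁, g₂, g₃ : ℝⁿ → ℝⁿ be C^∞ vector fields and set h₁ = g₁, h₂ = g₂, h₃ = g₃, h₄ = [g₃, g₁], h₅ = [g₃, g₂]. Assume that for every pair k, l ∈ {1, …, 5} there exist C^∞ functions c¹, …, c⁵ : ℝⁿ → ℝ such that [h_k, h_l] = Σ_{r=1}^{5} c^r · h_r (i.e., the distribution H₁,₃ = {g₁, g₂, g₃, [g₃,g₁], [g₃,g₂]} is involutive with smooth coefficients). Then for all p, q, r ∈ {1, 2, 3} and every x ∈ ℝⁿ, the second-order bracket [g_p, [g_q, g_r]](x) lies in span_ℝ{h₁(x), h₂(x), h₃(x), h₄(x), h₅(x)}. -/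
open VectorField in
lemma lieBracket_sum_smul_aux {n : ℕ} (V : (Fin n → ℝ) → (Fin n → ℝ))
    (h : Fin 5 → (Fin n → ℝ) → (Fin n → ℝ)) (c : Fin 5 → (Fin n → ℝ) → ℝ)
    (x : Fin n → ℝ)
    (hc : ∀ r, DifferentiableAt ℝ (c r) x) (hh : ∀ r, DifferentiableAt ℝ (h r) x)
    (hV : DifferentiableAt ℝ V x) :
    lieBracket ℝ V (fun y => ∑ r, c r y • h r y) x
      = ∑ r, (c r x • lieBracket ℝ V (h r) x + (fderiv ℝ (c r) x (V x)) • h r x) := by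
  have hd : ∀ r : Fin 5, DifferentiableAt ℝ (fun y => c r y • h r y) x :=
    fun r => (hc r).smul (hh r)
  have h1 : fderiv ℝ (fun y => ∑ r, c r y • h r y) x
      = ∑ r, fderiv ℝ (fun y => c r y • h r y) x := by
    rw [fderiv_fun_sum (fun r _ => hd r)]
  simp only [VectorField.lieBracket, h1, ContinuousLinearMap.sum_apply, map_sum]
  rw [← Finset.sum_sub_distrib]
  refine Finset.sum_congr rfl fun r _ => ?_
  rw [fderiv_fun_smul (hc r) (hh r)]
  simp [smul_sub, sub_add_eq_add_sub]

theorem second_order_brackets_in_involutive_H13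
    (n : ℕ) (g₁ g₂ g₃ : (Fin n → ℝ) → (Fin n → ℝ))
    (hg₁ : ContDiff ℝ (⊤ : ℕ∞) g₁) (hg₂ : ContDiff ℝ (⊤ : ℕ∞) g₂) (hg₃ : ContDiff ℝ (⊤ : ℕ∞) g₃)
    (h : Fin 5 → (Fin n → ℝ) → (Fin n → ℝ))
    (hdef : h = ![g₁, g₂, g₃, VectorField.lieBracket ℝ g₃ g₁, VectorField.lieBracket ℝ g₃ g₂])
    (hinv : ∀ k l : Fin 5, ∃ c : Fin 5 → (Fin n → ℝ) → ℝ,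
      (∀ r, ContDiff ℝ (⊤ : ℕ∞) (c r)) ∧
      VectorField.lieBracket ℝ (h k) (h l) = fun x => ∑ r, c r x • h r x) :
    ∀ p q r : Fin 3, ∀ x : Fin n → ℝ,
      VectorField.lieBracket ℝ (![g₁, g₂, g₃] p)
        (VectorField.lieBracket ℝ (![g₁, g₂, g₃] q) (![g₁, g₂, g₃] r)) x ∈
      Submodule.span ℝ (Set.range fun k : Fin 5 => h k x) := by
  intro p q r x
  have hsm : ∀ k : Fin 5, ContDiff ℝ (⊤ : ℕ∞) (h k) := by
    intro k
    fin_cases k <;> simp only [hdef, Matrix.cons_val_zero, Matrix.cons_val_one,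
      Matrix.head_cons, Matrix.cons_val_fin_one, Fin.isValue]
    · exact hg₁
    · exact hg₂
    · exact hg₃
    · exact hg₃.lieBracket_vectorField hg₁ (by simp)
    · exact hg₃.lieBracket_vectorField hg₂ (by simp)
  have key : ∀ p : Fin 3, ![g₁, g₂, g₃] p = h ⟨p.1, by omega⟩ := by
    intro p; fin_cases p <;> simp [hdef]
  rw [key p, key q, key r]
  obtain ⟨c, hc, hcc⟩ := hinv ⟨q.1, by omega⟩ ⟨r.1, by omega⟩
  rw [hcc, lieBracket_sum_smul_aux _ _ _ _
    (fun s => (hc s).differentiable (by simp) |>.differentiableAt)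
    (fun s => (hsm s).differentiable (by simp) |>.differentiableAt)
    ((hsm _).differentiable (by simp) |>.differentiableAt)]
  refine Submodule.sum_mem _ fun i _ => Submodule.add_mem _ ?_ ?_
  · obtain ⟨d, hd, hdd⟩ := hinv ⟨p.1, by omega⟩ i
    rw [congrFun hdd x]
    exact Submodule.smul_mem _ _ (Submodule.sum_mem _ fun s _ =>
      Submodule.smul_mem _ _ (Submodule.subset_span ⟨s, rfl⟩))
  · exact Submodule.smul_mem _ _ (Submodule.subset_span ⟨i, rfl⟩)
end

section
/- On ℝ⁵ consider the C^∞ vector fields g₁(x) = (−1/2, 0, 1, 0, 0), g₂(x) = (0, −1/2, 0, 1, 0), g₃(x) = (−x₂/2, x₁/2, 0, 0, 1). Then for every x ∈ ℝ⁵, the five vectors g₁(x), g₂(x), g₃(x), [g₃, g₁](x), [g₃, g₂](x) are linearly independent, hence span ℝ⁵ (i.e., the distribution H₁,₃ = {g₁, g₂, g₃, [g₃,g₁], [g₃,g₂]} has rank 5 everywhere). -/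
/-- First input vector field of the three-input, five-state example. -/
noncomputable def exG1 (_x : Fin 5 → ℝ) : Fin 5 → ℝ := ![-(1/2), 0, 1, 0, 0]

/-- Second input vector field of the three-input, five-state example. -/
noncomputable def exG2 (_x : Fin 5 → ℝ) : Fin 5 → ℝ := ![0, -(1/2), 0, 1, 0]

/-- Third input vector field of the three-input, five-state example. -/
noncomputable def exG3 (x : Fin 5 → ℝ) : Fin 5 → ℝ := ![-(x 1)/2, x 0/2, 0, 0, 1]

/-!
Since `g₁`, `g₂` are constant and `g₃ = L + e₅` is affine, `[g₃, gᵢ] = -L gᵢ` is constant: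
`[g₃, g₁] = (0, 1/4, 0, 0, 0)` and `[g₃, g₂] = (-1/4, 0, 0, 0, 0)`. The matrix with rows
`g₁, g₂, g₃, [g₃, g₁], [g₃, g₂]` then has determinant `1/16` at every point (the entries of `g₃`
that depend on `x` sit in the two columns pivoted by the brackets), so the five vectors form a
basis.
-/

theorem VectorField.lieBracket_affine_const {𝕜 E : Type*} [NontriviallyNormedField 𝕜]
    [NormedAddCommGroup E] [NormedSpace 𝕜 E] (L : E →L[𝕜] E) (b c x : E) :
    lieBracket 𝕜 (fun y ↦ L y + b) (fun _ ↦ c) x = -L c := by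
  rw [lieBracket, fderiv_const_apply, (L.hasFDerivAt.add_const b).fderiv]
  simp

noncomputable def exG3Linear : (Fin 5 → ℝ) →L[ℝ] (Fin 5 → ℝ) :=
  ContinuousLinearMap.pi
    ![(-(1/2) : ℝ) • ContinuousLinearMap.proj 1, (1/2 : ℝ) • ContinuousLinearMap.proj 0, 0, 0, 0]

theorem exG3_eq_affine : exG3 = fun x ↦ exG3Linear x + ![0, 0, 0, 0, 1] := by
  funext x
  ext i
  fin_cases i <;> simp [exG3, exG3Linear] <;> ring

theorem lieBracket_exG3_exG1 (x : Fin 5 → ℝ) :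
    VectorField.lieBracket ℝ exG3 exG1 x = ![0, 1/4, 0, 0, 0] := by
  rw [exG3_eq_affine, show exG1 = fun _ ↦ ![-(1/2), 0, 1, 0, 0] from rfl,
    VectorField.lieBracket_affine_const]
  ext i
  fin_cases i <;> norm_num [exG3Linear]

theorem lieBracket_exG3_exG2 (x : Fin 5 → ℝ) :
    VectorField.lieBracket ℝ exG3 exG2 x = ![-(1/4), 0, 0, 0, 0] := by
  rw [exG3_eq_affine, show exG2 = fun _ ↦ ![0, -(1/2), 0, 1, 0] from rfl,
    VectorField.lieBracket_affine_const]
  ext i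
  fin_cases i <;> norm_num [exG3Linear]

theorem det_exG_frame (x : Fin 5 → ℝ) :
    (Matrix.of ![exG1 x, exG2 x, exG3 x, ![0, 1/4, 0, 0, 0], ![-(1/4), 0, 0, 0, 0]]).det
      = 1 / 16 := by
  simp [exG1, exG2, exG3, Matrix.det_succ_row_zero, Fin.sum_univ_succ, Fin.succAbove]
  norm_num

theorem example_H13_full_rank :
    ∀ x : Fin 5 → ℝ,
      LinearIndependent ℝ
        ![exG1 x, exG2 x, exG3 x,
          VectorField.lieBracket ℝ exG3 exG1 x,
          VectorField.lieBracket ℝ exG3 exG2 x] ∧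
      Submodule.span ℝ
        (Set.range ![exG1 x, exG2 x, exG3 x,
          VectorField.lieBracket ℝ exG3 exG1 x,
          VectorField.lieBracket ℝ exG3 exG2 x]) = ⊤ := by
  intro x
  rw [(Pi.basisFun ℝ (Fin 5)).is_basis_iff_det, Pi.basisFun_det_apply, lieBracket_exG3_exG1,
    lieBracket_exG3_exG2, det_exG_frame]
  norm_num
end

section
/- On ℝ⁵ consider the C^∞ vector fields g₁(x) = (−1/2, 0, 1, 0, 0), g₂(x) = (0, −1/2, 0, 1, 0), g₃(x) = (−x₂/2, x₁/2, 0, 0, 1). Let x : ℝ → ℝ⁵ be differentiable and u₁, u₂, u₃ : ℝ → ℝ satisfy x'(t) = u₁(t)·g₁(x(t)) + u₂(t)·g₂(x(t)) + u₃(t)·g₃(x(t)) for all t. Then for every t: (x₅)'(t) = u₃(t), (2x₁ + x₃)'(t) = −u₃(t)·x₂(t), and (2x₂ + x₄)'(t) = u₃(t)·x₁(t); consequently, at every t with u₃(t) ≠ 0, x₁(t) = (2x₂ + x₄)'(t) / (x₅)'(t) and x₂(t) = −(2x₁ + x₃)'(t) / (x₅)'(t). -/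
section ExampleField

variable (u₁ u₂ u₃ : ℝ) (p : Fin 5 → ℝ)

lemma exField_apply_four : (u₁ • exG1 p + u₂ • exG2 p + u₃ • exG3 p) 4 = u₃ := by
  simp only [exG1, exG2, exG3, Pi.add_apply, Pi.smul_apply, smul_eq_mul, Matrix.cons_val]
  ring

lemma two_mul_exField_apply_zero_add_apply_two :
    2 * (u₁ • exG1 p + u₂ • exG2 p + u₃ • exG3 p) 0
      + (u₁ • exG1 p + u₂ • exG2 p + u₃ • exG3 p) 2 = -u₃ * p 1 := by
  simp only [exG1, exG2, exG3, Pi.add_apply, Pi.smul_apply, smul_eq_mul, Matrix.cons_val]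
  ring

lemma two_mul_exField_apply_one_add_apply_three :
    2 * (u₁ • exG1 p + u₂ • exG2 p + u₃ • exG3 p) 1
      + (u₁ • exG1 p + u₂ • exG2 p + u₃ • exG3 p) 3 = u₃ * p 0 := by
  simp only [exG1, exG2, exG3, Pi.add_apply, Pi.smul_apply, smul_eq_mul, Matrix.cons_val]
  ring

end ExampleField

section CoordinateDerivatives

variable {ι : Type*} [Fintype ι] {x : ℝ → ι → ℝ} {t : ℝ}

lemma deriv_apply_of_differentiableAt (hx : DifferentiableAt ℝ x t) (i : ι) :
    deriv (fun s => x s i) t = deriv x t i :=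
  (hasDerivAt_pi.1 hx.hasDerivAt i).deriv

lemma deriv_const_mul_apply_add_apply (hx : DifferentiableAt ℝ x t) (c : ℝ) (i j : ι) :
    deriv (fun s => c * x s i + x s j) t = c * deriv x t i + deriv x t j :=
  (((hasDerivAt_pi.1 hx.hasDerivAt i).const_mul c).add (hasDerivAt_pi.1 hx.hasDerivAt j)).deriv

end CoordinateDerivatives

theorem example_states_from_flat_outputs
    (x : ℝ → (Fin 5 → ℝ)) (u₁ u₂ u₃ : ℝ → ℝ)
    (hx : Differentiable ℝ x)
    (hsys : ∀ t, deriv x t = u₁ t • exG1 (x t) + u₂ t • exG2 (x t) + u₃ t • exG3 (x t)) :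
    ∀ t : ℝ,
      deriv (fun s => x s 4) t = u₃ t ∧
      deriv (fun s => 2 * x s 0 + x s 2) t = -(u₃ t) * x t 1 ∧
      deriv (fun s => 2 * x s 1 + x s 3) t = u₃ t * x t 0 ∧
      (u₃ t ≠ 0 →
        x t 0 = deriv (fun s => 2 * x s 1 + x s 3) t / deriv (fun s => x s 4) t ∧
        x t 1 = -(deriv (fun s => 2 * x s 0 + x s 2) t / deriv (fun s => x s 4) t)) := by
  intro t
  have hy₁ : deriv (fun s => x s 4) t = u₃ t := by
    rw [deriv_apply_of_differentiableAt (hx t), hsys, exField_apply_four]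
  have hy₂ : deriv (fun s => 2 * x s 0 + x s 2) t = -(u₃ t) * x t 1 := by
    rw [deriv_const_mul_apply_add_apply (hx t), hsys, two_mul_exField_apply_zero_add_apply_two]
  have hy₃ : deriv (fun s => 2 * x s 1 + x s 3) t = u₃ t * x t 0 := by
    rw [deriv_const_mul_apply_add_apply (hx t), hsys, two_mul_exField_apply_one_add_apply_three]
  refine ⟨hy₁, hy₂, hy₃, fun hu => ?_⟩
  rw [hy₁, hy₂, hy₃, neg_mul, neg_div, neg_neg, mul_div_cancel_left₀ _ hu,
    mul_div_cancel_left₀ _ hu]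
  exact ⟨rfl, rfl⟩
end
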